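/- Let H and H' be finite-dimensional Hopf algebras over ℂ with bijective antipodes, and let f : H → H' be a surjective bialgebra homomorphism (so H' is a Hopf algebra quotient of H). If a positive integer n satisfies the quasi-exponent condition for H, then n satisfies the quasi-exponent condition for H'. In particular, the quasi-exponent of any Hopf algebra quotient of H divides qexp(H). -/

import Mathlib

open TensorProduct

/-- The maps `T_n : H → H`: `T_0 = ι ∘ ε`, and `T_{n+1} = m ∘ (T_n ⊗ S^{-2n}) ∘ Δ`, i.e.
`T_n = m_n ∘ (Id ⊗ S⁻² ⊗ S⁻⁴ ⊗ ⋯ ⊗ S^{-2n+2}) ∘ Δ_n` where `m_n = m ∘ (m_{n-1} ⊗ Id)` and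
`Δ_n = (Δ_{n-1} ⊗ Id) ∘ Δ`.  Here `Sinv` is the inverse of the antipode. -/
noncomputable def qeT (H : Type*) [Ring H] [Bialgebra ℂ H] (Sinv : H →ₗ[ℂ] H) :
    ℕ → (H →ₗ[ℂ] H)
  | 0 => Algebra.linearMap ℂ H ∘ₗ Coalgebra.counit
  | n + 1 =>
      LinearMap.mul' ℂ H ∘ₗ TensorProduct.map (qeT H Sinv n) ((Sinv ∘ₗ Sinv) ^ n)
        ∘ₗ Coalgebra.comul

/-- A positive integer `n` satisfies the quasi-exponent condition for `H` if
`∑_{k=0}^N (-1)^k (N choose k) T_{nk} = 0` for some positive integer `N`. -/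
noncomputable def qexpCond (H : Type*) [Ring H] [Bialgebra ℂ H] (Sinv : H →ₗ[ℂ] H)
    (n : ℕ) : Prop :=
  ∃ N : ℕ, 0 < N ∧
    ∑ k ∈ Finset.range (N + 1), ((-1 : ℂ) ^ k * (N.choose k : ℂ)) • qeT H Sinv (n * k) = 0

open Polynomial WithConv

/-! In the convolution algebra on `H →ₗ H` one has `T_{n+1} = T_n ⋆ S^{-2n}`, and `S^{-2}` is an
algebra automorphism, so `T_n = Lⁿ (ι ∘ ε)` for the operator `L x = id ⋆ (S^{-2} ∘ x)`.
Hence `n` satisfies the quasi-exponent condition iff `1 - Lⁿ` is nilpotent at `ι ∘ ε`, i.e. iff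
`Xⁿ = 1` modulo the radical of the annihilator of `ι ∘ ε` in `ℂ[X]`; in particular such `n` are
closed under `gcd`. A surjective bialgebra map intertwines the antipodes, hence the `T_n`, and so
carries the condition from `H` to `H'`. Finally, the least element of a `gcd`-closed set of
positive integers divides all of its elements. -/

lemma Nat.sInf_dvd_sInf_of_subset {S T : Set ℕ} (hST : S ⊆ T) (hT₀ : 0 ∉ T)
    (hT : ∀ a ∈ T, ∀ b ∈ T, a.gcd b ∈ T) : sInf T ∣ sInf S := by
  rcases S.eq_empty_or_nonempty with rfl | hS
  · rw [Nat.sInf_empty]; exact dvd_zero _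
  have hm : sInf S ∈ T := hST (Nat.sInf_mem hS)
  have ht : sInf T ∈ T := Nat.sInf_mem ⟨_, hm⟩
  have hg := hT _ ht _ hm
  have hpos : 0 < sInf T := Nat.pos_of_ne_zero fun h => hT₀ (h ▸ ht)
  rw [← Nat.gcd_eq_left_iff_dvd]
  exact le_antisymm (Nat.le_of_dvd hpos (Nat.gcd_dvd_left _ _)) (Nat.sInf_le hg)

lemma one_sub_pow_eq_sum {R A : Type*} [CommRing R] [Ring A] [Algebra R A] (u : A) (N : ℕ) :
    (1 - u) ^ N = ∑ k ∈ Finset.range (N + 1), ((-1 : R) ^ k * (N.choose k : R)) • u ^ k := by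
  rw [sub_eq_neg_add, (Commute.one_right (-u)).add_pow]
  refine Finset.sum_congr rfl fun k _ => ?_
  rw [one_pow, mul_one, neg_pow, Algebra.smul_def, mul_assoc, ← Nat.cast_comm]
  simp [mul_assoc]

namespace Module.End

variable {R V : Type*} [CommRing R] [AddCommGroup V] [Module R V]

lemma aeval_apply_eq_zero_iff_mem_torsionOf (L : Module.End R V) (e : V) (q : R[X]) :
    aeval L q e = 0 ↔ q ∈ Ideal.torsionOf R[X] (AEval' L) (AEval'.of L e) := by
  rw [Ideal.mem_torsionOf_iff, ← Module.AEval.of_aeval_smul, LinearEquiv.map_eq_zero_iff]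
  rfl

lemma exists_one_sub_pow_pow_apply_eq_zero_iff (L : Module.End R V) (e : V) (n : ℕ) :
    (∃ N, ((1 - L ^ n) ^ N : Module.End R V) e = 0) ↔
      Ideal.Quotient.mk (Ideal.torsionOf R[X] (AEval' L) (AEval'.of L e)).radical X ^ n = 1 := by
  rw [← map_pow, ← map_one (Ideal.Quotient.mk _), eq_comm, Ideal.Quotient.eq]
  refine exists_congr fun N => ?_
  rw [← aeval_apply_eq_zero_iff_mem_torsionOf]
  simp

lemma exists_one_sub_pow_gcd_pow_apply_eq_zero (L : Module.End R V) (e : V) {a b : ℕ}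
    (ha : ∃ N, ((1 - L ^ a) ^ N : Module.End R V) e = 0)
    (hb : ∃ N, ((1 - L ^ b) ^ N : Module.End R V) e = 0) :
    ∃ N, ((1 - L ^ a.gcd b) ^ N : Module.End R V) e = 0 := by
  rw [exists_one_sub_pow_pow_apply_eq_zero_iff] at *
  exact pow_gcd_eq_one.mpr ⟨ha, hb⟩

end Module.End

namespace HopfAlgebra

variable {R A B : Type*} [CommSemiring R] [Semiring A] [Semiring B]
  [HopfAlgebra R A] [HopfAlgebra R B]

theorem antipode_comp_bialgHom (f : A →ₐc[R] B) :
    antipode R ∘ₗ (f : A →ₗ[R] B) = (f : A →ₗ[R] B) ∘ₗ antipode R := by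
  have hleft : toConv ((f : A →ₗ[R] B) ∘ₗ antipode R) * toConv (f : A →ₗ[R] B) = 1 := by
    have := LinearMap.algHom_comp_convMul_distrib (AlgHomClass.toAlgHom f)
      (toConv (antipode R)) (toConv LinearMap.id)
    rw [LinearMap.antipode_mul_id, LinearMap.algHom_comp_convOne] at this
    exact ofConv_injective this.symm
  have hright : toConv (f : A →ₗ[R] B) * toConv (antipode R ∘ₗ (f : A →ₗ[R] B)) = 1 := by
    have := LinearMap.convMul_comp_coalgHom_distrib (toConv LinearMap.id) (toConv (antipode R))
      (f : A →ₗc[R] B)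
    rw [LinearMap.id_mul_antipode, LinearMap.convOne_comp_coalgHom] at this
    exact ofConv_injective this.symm
  exact toConv_injective (left_inv_eq_right_inv hleft hright).symm

variable {Sinv : A →ₗ[R] A}

lemma antipodeInv_map_one (hS₁ : Sinv ∘ₗ antipode R = LinearMap.id) : Sinv 1 = 1 := by
  simpa [antipode_one] using LinearMap.congr_fun hS₁ 1

lemma antipodeInv_map_mul (hS₁ : Sinv ∘ₗ antipode R = LinearMap.id)
    (hS₂ : antipode R ∘ₗ Sinv = LinearMap.id) (x y : A) :
    Sinv (x * y) = Sinv y * Sinv x := by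
  have hS : Function.LeftInverse Sinv (antipode R) := LinearMap.congr_fun hS₁
  have hS' : Function.RightInverse Sinv (antipode R) := LinearMap.congr_fun hS₂
  apply hS.injective
  rw [hS', antipode_mul_antidistrib, hS', hS']

noncomputable def antipodeInvSq (hS₁ : Sinv ∘ₗ antipode R = LinearMap.id)
    (hS₂ : antipode R ∘ₗ Sinv = LinearMap.id) : A →ₐ[R] A :=
  .ofLinearMap (Sinv ∘ₗ Sinv) (by simp [antipodeInv_map_one hS₁])
    (fun x y => by simp [antipodeInv_map_mul hS₁ hS₂])

lemma toLinearMap_antipodeInvSq (hS₁ : Sinv ∘ₗ antipode R = LinearMap.id)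
    (hS₂ : antipode R ∘ₗ Sinv = LinearMap.id) :
    (antipodeInvSq hS₁ hS₂).toLinearMap = Sinv ∘ₗ Sinv := rfl

lemma bialgHom_comp_antipodeInv {Sinv' : B →ₗ[R] B} (f : A →ₐc[R] B)
    (hS₂ : antipode R ∘ₗ Sinv = LinearMap.id) (hS₁' : Sinv' ∘ₗ antipode R = LinearMap.id) :
    (f : A →ₗ[R] B) ∘ₗ Sinv = Sinv' ∘ₗ (f : A →ₗ[R] B) := by
  calc (f : A →ₗ[R] B) ∘ₗ Sinv = (Sinv' ∘ₗ antipode R) ∘ₗ (f : A →ₗ[R] B) ∘ₗ Sinv := by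
        rw [hS₁', LinearMap.id_comp]
    _ = Sinv' ∘ₗ (f : A →ₗ[R] B) ∘ₗ antipode R ∘ₗ Sinv := by
        simp only [LinearMap.comp_assoc, ← LinearMap.comp_assoc _ _ (antipode R),
          antipode_comp_bialgHom]
    _ = Sinv' ∘ₗ (f : A →ₗ[R] B) := by rw [hS₂, LinearMap.comp_id]

end HopfAlgebra

section convShift

variable {R H : Type*} [CommSemiring R] [Semiring H] [Bialgebra R H]

noncomputable def convShift (σ : H →ₐ[R] H) : Module.End R (WithConv (H →ₗ[R] H)) where
  toFun x := toConv LinearMap.id * toConv (σ.toLinearMap ∘ₗ x.ofConv)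
  map_add' x y := by simp [LinearMap.comp_add, mul_add]
  map_smul' c x := by simp [LinearMap.comp_smul]

lemma convShift_apply (σ : H →ₐ[R] H) (x : WithConv (H →ₗ[R] H)) :
    convShift σ x = toConv LinearMap.id * toConv (σ.toLinearMap ∘ₗ x.ofConv) := rfl

lemma convShift_one (σ : H →ₐ[R] H) : convShift σ 1 = toConv LinearMap.id := by
  have : σ.toLinearMap ∘ₗ (1 : WithConv (H →ₗ[R] H)).ofConv =
      (1 : WithConv (H →ₗ[R] H)).ofConv := by
    ext; simp
  rw [convShift_apply, this, toConv_ofConv, mul_one]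

lemma convShift_mul (σ : H →ₐ[R] H) (x y : WithConv (H →ₗ[R] H)) :
    convShift σ (x * y) = convShift σ x * toConv (σ.toLinearMap ∘ₗ y.ofConv) := by
  rw [convShift_apply, convShift_apply, LinearMap.algHom_comp_convMul_distrib, toConv_ofConv,
    mul_assoc]

end convShift

section qeT

variable {H : Type*} [Ring H] [Bialgebra ℂ H] {Sinv : H →ₗ[ℂ] H}

lemma toConv_qeT_zero : toConv (qeT H Sinv 0) = 1 := rfl

lemma toConv_qeT_succ (n : ℕ) :
    toConv (qeT H Sinv (n + 1)) = toConv (qeT H Sinv n) * toConv ((Sinv ∘ₗ Sinv) ^ n) := rfl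

variable {σ : H →ₐ[ℂ] H}

lemma convShift_qeT (hσ : σ.toLinearMap = Sinv ∘ₗ Sinv) (n : ℕ) :
    convShift σ (toConv (qeT H Sinv n)) = toConv (qeT H Sinv (n + 1)) := by
  induction n with
  | zero => rw [toConv_qeT_succ, toConv_qeT_zero, convShift_one, one_mul, pow_zero]; rfl
  | succ n ih =>
    rw [toConv_qeT_succ n, convShift_mul, ih, ofConv_toConv, hσ, ← Module.End.mul_eq_comp,
      ← pow_succ', ← toConv_qeT_succ]

lemma toConv_qeT_eq_convShift_pow (hσ : σ.toLinearMap = Sinv ∘ₗ Sinv) (n : ℕ) :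
    toConv (qeT H Sinv n) = (convShift σ ^ n) 1 := by
  induction n with
  | zero => rfl
  | succ n ih => rw [← convShift_qeT hσ, ih, pow_succ', Module.End.mul_apply]

lemma qexpCond_iff (hσ : σ.toLinearMap = Sinv ∘ₗ Sinv) (n : ℕ) :
    qexpCond H Sinv n ↔ ∃ N, ((1 - convShift σ ^ n) ^ N : Module.End ℂ _) 1 = 0 := by
  have hsum (N : ℕ) : toConv (∑ k ∈ Finset.range (N + 1),
      ((-1 : ℂ) ^ k * (N.choose k : ℂ)) • qeT H Sinv (n * k)) =
      ((1 - convShift σ ^ n) ^ N : Module.End ℂ _) 1 := by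
    simp only [one_sub_pow_eq_sum (R := ℂ), LinearMap.sum_apply, LinearMap.smul_apply, toConv_sum,
      toConv_smul, toConv_qeT_eq_convShift_pow hσ, pow_mul]
  constructor
  · rintro ⟨N, -, h⟩
    exact ⟨N, by rw [← hsum, h, toConv_zero]⟩
  · rintro ⟨N, h⟩
    refine ⟨N + 1, N.succ_pos, ?_⟩
    rw [← toConv_eq_zero, hsum]
    exact Module.End.pow_map_zero_of_le N.le_succ h

variable {H' : Type*} [Ring H'] [Bialgebra ℂ H'] {Sinv' : H' →ₗ[ℂ] H'}

lemma bialgHom_comp_qeT (f : H →ₐc[ℂ] H')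
    (hf : (f : H →ₗ[ℂ] H') ∘ₗ Sinv = Sinv' ∘ₗ (f : H →ₗ[ℂ] H')) (n : ℕ) :
    (f : H →ₗ[ℂ] H') ∘ₗ qeT H Sinv n = qeT H' Sinv' n ∘ₗ (f : H →ₗ[ℂ] H') := by
  induction n with
  | zero => ext; simp [qeT, AlgHomClass.commutes]
  | succ n ih =>
    have hσ : (f : H →ₗ[ℂ] H') ∘ₗ (Sinv ∘ₗ Sinv) ^ n =
        ((Sinv' ∘ₗ Sinv') ^ n) ∘ₗ (f : H →ₗ[ℂ] H') :=
      (Module.End.commute_pow_left_of_commute (by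
        rw [LinearMap.comp_assoc, ← hf, ← LinearMap.comp_assoc, ← hf, LinearMap.comp_assoc]) n).symm
    have hl := LinearMap.algHom_comp_convMul_distrib (AlgHomClass.toAlgHom f)
      (toConv (qeT H Sinv n)) (toConv ((Sinv ∘ₗ Sinv) ^ n))
    have hr := LinearMap.convMul_comp_coalgHom_distrib (toConv (qeT H' Sinv' n))
      (toConv ((Sinv' ∘ₗ Sinv') ^ n)) (f : H →ₗc[ℂ] H')
    refine (hl.trans ?_).trans hr.symm
    congr 2
    · exact congrArg toConv ih
    · exact congrArg toConv hσ

lemma qexpCond.gcd (hσ : σ.toLinearMap = Sinv ∘ₗ Sinv) {a b : ℕ} (ha : qexpCond H Sinv a)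
    (hb : qexpCond H Sinv b) : qexpCond H Sinv (a.gcd b) := by
  rw [qexpCond_iff hσ] at *
  exact Module.End.exists_one_sub_pow_gcd_pow_apply_eq_zero _ _ ha hb

lemma qexpCond.of_surjective (f : H →ₐc[ℂ] H') (hf : Function.Surjective f)
    (hfS : (f : H →ₗ[ℂ] H') ∘ₗ Sinv = Sinv' ∘ₗ (f : H →ₗ[ℂ] H')) {n : ℕ}
    (h : qexpCond H Sinv n) : qexpCond H' Sinv' n := by
  obtain ⟨N, hN, hsum⟩ := h
  refine ⟨N, hN, LinearMap.ext fun y => ?_⟩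
  obtain ⟨x, rfl⟩ := hf y
  have hcomm (k : ℕ) := LinearMap.congr_fun (bialgHom_comp_qeT f hfS (n * k)) x
  simp only [LinearMap.coe_comp, LinearMap.coe_coe, Function.comp_apply] at hcomm
  simpa [← hcomm] using congr(f ($hsum x))

end qeT

theorem qexpCond_of_hopfQuotient_general (H H' : Type*) [Ring H] [HopfAlgebra ℂ H]
    [Ring H'] [HopfAlgebra ℂ H']
    (Sinv : H →ₗ[ℂ] H)
    (hS₂ : HopfAlgebra.antipode (R := ℂ) (A := H) ∘ₗ Sinv = LinearMap.id)
    (Sinv' : H' →ₗ[ℂ] H')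
    (hS₁' : Sinv' ∘ₗ HopfAlgebra.antipode (R := ℂ) (A := H') = LinearMap.id)
    (hS₂' : HopfAlgebra.antipode (R := ℂ) (A := H') ∘ₗ Sinv' = LinearMap.id)
    (f : H →ₐc[ℂ] H') (hf : Function.Surjective f) :
    (∀ n : ℕ, 0 < n → qexpCond H Sinv n → qexpCond H' Sinv' n) ∧
      sInf {m : ℕ | 0 < m ∧ qexpCond H' Sinv' m} ∣
        sInf {m : ℕ | 0 < m ∧ qexpCond H Sinv m} := by
  have transfer {n : ℕ} (h : qexpCond H Sinv n) : qexpCond H' Sinv' n :=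
    h.of_surjective f hf (HopfAlgebra.bialgHom_comp_antipodeInv f hS₂ hS₁')
  refine ⟨fun _ _ => transfer, Nat.sInf_dvd_sInf_of_subset (fun m hm => ⟨hm.1, transfer hm.2⟩)
    (fun h => h.1.false) ?_⟩
  rintro a ⟨ha, hA⟩ b ⟨-, hB⟩
  exact ⟨Nat.gcd_pos_of_pos_left b ha, hA.gcd (HopfAlgebra.toLinearMap_antipodeInvSq hS₁' hS₂') hB⟩

/-- If `H'` is a Hopf algebra quotient of a finite-dimensional Hopf algebra `H` over `ℂ`
(with bijective antipodes), i.e. there is a surjective bialgebra homomorphism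
`f : H → H'`, then every positive integer satisfying the quasi-exponent condition for `H`
also satisfies it for `H'`; in particular `qexp H'` divides `qexp H`. -/
theorem qexpCond_of_hopfQuotient (H H' : Type*) [Ring H] [HopfAlgebra ℂ H]
    [FiniteDimensional ℂ H] [Ring H'] [HopfAlgebra ℂ H'] [FiniteDimensional ℂ H']
    (Sinv : H →ₗ[ℂ] H)
    (hS₁ : Sinv ∘ₗ HopfAlgebra.antipode (R := ℂ) (A := H) = LinearMap.id)
    (hS₂ : HopfAlgebra.antipode (R := ℂ) (A := H) ∘ₗ Sinv = LinearMap.id)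
    (Sinv' : H' →ₗ[ℂ] H')
    (hS₁' : Sinv' ∘ₗ HopfAlgebra.antipode (R := ℂ) (A := H') = LinearMap.id)
    (hS₂' : HopfAlgebra.antipode (R := ℂ) (A := H') ∘ₗ Sinv' = LinearMap.id)
    (f : H →ₐc[ℂ] H') (hf : Function.Surjective f) :
    (∀ n : ℕ, 0 < n → qexpCond H Sinv n → qexpCond H' Sinv' n) ∧
      sInf {m : ℕ | 0 < m ∧ qexpCond H' Sinv' m} ∣
        sInf {m : ℕ | 0 < m ∧ qexpCond H Sinv m} :=
  qexpCond_of_hopfQuotient_general H H' Sinv hS₂ Sinv' hS₁' hS₂' f hf
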